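/- Let G be the standard Gaussian CDF, b_n defined by 1 - G(b_n) = 1/n, and a_n = 1/b_n. Then for all x ∈ ℝ, lim_{n→∞} n·(1 - G(a_n x + b_n)) = e^{-x}. -/

import Mathlib

/-!
Let `Q(t) = ∫_t^∞ φ` be the standard Gaussian tail, so `1 - G = Q`. Since `φ' = -t φ`,
integrating `φ ≤ (u / t) φ(u)` and `-(u φ(u) / (u² + 1))' ≤ φ(u)` over `(t, ∞)` gives Mills'
inequalities `t / (t² + 1) · φ(t) ≤ Q(t) ≤ φ(t) / t`, hence `Q(t) ~ φ(t) / t` as `t → ∞`.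
For `c = b + x / b` one has `φ(c) / φ(b) = exp (-x - x² / (2 b²))` and `c / b → 1`, so
`Q(c) / Q(b) → e^{-x}` as `b → ∞`. Finally `Q(b_n) = 1 / n → 0` forces `b_n → ∞`, and
`n (1 - G(a_n x + b_n)) = Q(c_n) / Q(b_n)`.
-/

open MeasureTheory Filter Topology Real Set Asymptotics ProbabilityTheory

local notation "φ" => gaussianPDFReal 0 1

lemma gaussianPDFReal_zero_one (x : ℝ) : φ x = (√(2 * π))⁻¹ * exp (-x ^ 2 / 2) := by
  simp [gaussianPDFReal]

lemma hasDerivAt_gaussianPDFReal_zero_one (x : ℝ) : HasDerivAt φ (-x * φ x) x := by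
  have h : HasDerivAt (fun y : ℝ => -y ^ 2 / 2) (-x) x :=
    ((hasDerivAt_pow 2 x).fun_neg.div_const 2).congr_deriv (by push_cast; ring)
  rw [funext gaussianPDFReal_zero_one]
  exact (h.exp.const_mul _).congr_deriv (by ring)

lemma gaussianPDFReal_zero_one_div (c b : ℝ) : φ c / φ b = exp ((b ^ 2 - c ^ 2) / 2) := by
  rw [gaussianPDFReal_zero_one, gaussianPDFReal_zero_one, mul_div_mul_left _ _ (by positivity),
    ← exp_sub]
  ring_nf

lemma tendsto_gaussianPDFReal_zero_one_atTop : Tendsto φ atTop (𝓝 0) := by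
  have h : Tendsto (fun x : ℝ => -x ^ 2 / 2) atTop atBot :=
    (tendsto_neg_atTop_atBot.comp (tendsto_pow_atTop two_ne_zero)).atBot_div_const two_pos
  simpa [funext gaussianPDFReal_zero_one] using (tendsto_exp_atBot.comp h).const_mul (√(2 * π))⁻¹

lemma integrable_mul_gaussianPDFReal_zero_one : Integrable fun x => x * φ x := by
  simpa [funext gaussianPDFReal_zero_one, mul_left_comm, neg_div, div_eq_inv_mul] using
    (integrable_mul_exp_neg_mul_sq (b := 2⁻¹) (by norm_num)).const_mul (√(2 * π))⁻¹

lemma integral_Ioi_mul_gaussianPDFReal_zero_one (t : ℝ) : ∫ x in Ioi t, x * φ x = φ t := by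
  have h := integral_Ioi_of_hasDerivAt_of_tendsto' (f := fun x => -φ x) (a := t)
    (fun x _ => (hasDerivAt_gaussianPDFReal_zero_one x).neg)
    (by simpa using integrable_mul_gaussianPDFReal_zero_one.integrableOn)
    tendsto_gaussianPDFReal_zero_one_atTop.neg
  simpa using h

noncomputable def gaussianTail (t : ℝ) : ℝ := ∫ x in Ioi t, φ x

lemma integral_Iic_add_gaussianTail (t : ℝ) : (∫ x in Iic t, φ x) + gaussianTail t = 1 := by
  rw [gaussianTail, intervalIntegral.integral_Iic_add_Ioi
    (integrable_gaussianPDFReal 0 1).integrableOn (integrable_gaussianPDFReal 0 1).integrableOn,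
    integral_gaussianPDFReal_eq_one 0 one_ne_zero]

lemma gaussianTail_pos (t : ℝ) : 0 < gaussianTail t := by
  rw [gaussianTail, setIntegral_pos_iff_support_of_nonneg_ae
    (ae_of_all _ (gaussianPDFReal_nonneg 0 1)) (integrable_gaussianPDFReal 0 1).integrableOn]
  have : Function.support φ = univ :=
    Function.support_eq_univ fun x => (gaussianPDFReal_pos 0 1 x one_ne_zero).ne'
  simp [this]

lemma gaussianTail_antitone : Antitone gaussianTail := fun _ _ hst =>
  setIntegral_mono_set (integrable_gaussianPDFReal 0 1).integrableOn
    (ae_of_all _ (gaussianPDFReal_nonneg 0 1)) (Ioi_subset_Ioi hst).eventuallyLE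

lemma gaussianTail_le_gaussianPDFReal_zero_one_div {t : ℝ} (ht : 0 < t) :
    gaussianTail t ≤ φ t / t := by
  rw [← integral_Ioi_mul_gaussianPDFReal_zero_one, ← integral_div]
  refine setIntegral_mono_on (integrable_gaussianPDFReal 0 1).integrableOn
    (integrable_mul_gaussianPDFReal_zero_one.div_const t).integrableOn measurableSet_Ioi
    fun x hx => ?_
  rw [le_div_iff₀ ht, mul_comm x]
  exact mul_le_mul_of_nonneg_left (le_of_lt hx) (gaussianPDFReal_nonneg 0 1 x)

lemma hasDerivAt_div_sq_add_one_mul_gaussianPDFReal_zero_one (x : ℝ) :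
    HasDerivAt (fun y => y / (y ^ 2 + 1) * φ y) ((2 / (x ^ 2 + 1) ^ 2 - 1) * φ x) x := by
  have hden : HasDerivAt (fun y : ℝ => y ^ 2 + 1) (2 * x) x := by
    simpa using (hasDerivAt_pow 2 x).add_const 1
  have h := ((hasDerivAt_id x).div hden (by positivity)).mul (hasDerivAt_gaussianPDFReal_zero_one x)
  refine h.congr_deriv ?_
  simp only [Pi.div_apply, id]
  field_simp
  ring

lemma div_sq_add_one_mul_gaussianPDFReal_zero_one_le_gaussianTail (t : ℝ) :
    t / (t ^ 2 + 1) * φ t ≤ gaussianTail t := by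
  set g' : ℝ → ℝ := fun x => (2 / (x ^ 2 + 1) ^ 2 - 1) * φ x
  have hg'_int : IntegrableOn g' (Ioi t) := by
    refine ((integrable_gaussianPDFReal 0 1).bdd_mul (c := 1)
      (by fun_prop : Measurable _).aestronglyMeasurable (ae_of_all _ fun x => ?_)).integrableOn
    have h0 : 0 ≤ 2 / (x ^ 2 + 1) ^ 2 := by positivity
    have h2 : 2 / (x ^ 2 + 1) ^ 2 ≤ 2 :=
      div_le_self zero_le_two (one_le_pow₀ (le_add_of_nonneg_left (sq_nonneg x)))
    rw [Real.norm_eq_abs, abs_le]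
    constructor <;> linarith
  have hg_lim : Tendsto (fun y => y / (y ^ 2 + 1) * φ y) atTop (𝓝 0) := by
    refine tendsto_of_tendsto_of_tendsto_of_le_of_le' tendsto_const_nhds
      tendsto_gaussianPDFReal_zero_one_atTop ?_ ?_ <;>
      filter_upwards [eventually_ge_atTop 0] with y hy
    · have := gaussianPDFReal_nonneg 0 1 y
      positivity
    · refine mul_le_of_le_one_left (gaussianPDFReal_nonneg 0 1 y) ?_
      rw [div_le_one (by positivity)]
      nlinarith
  have h := integral_Ioi_of_hasDerivAt_of_tendsto'
    (fun x _ => hasDerivAt_div_sq_add_one_mul_gaussianPDFReal_zero_one x) hg'_int hg_lim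
  calc t / (t ^ 2 + 1) * φ t = ∫ x in Ioi t, -g' x := by rw [integral_neg, h]; ring
    _ ≤ gaussianTail t := by
      refine setIntegral_mono_on hg'_int.neg (integrable_gaussianPDFReal 0 1).integrableOn
        measurableSet_Ioi fun x _ => ?_
      have : 0 ≤ 2 / (x ^ 2 + 1) ^ 2 * φ x := by
        have := gaussianPDFReal_nonneg 0 1 x
        positivity
      simp only [g']
      linarith

lemma gaussianTail_isEquivalent : gaussianTail ~[atTop] fun t => φ t / t := by
  refine isEquivalent_of_tendsto_one ?_
  have hlow : Tendsto (fun t : ℝ => 1 - (t ^ 2 + 1)⁻¹) atTop (𝓝 1) := by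
    have h : Tendsto (fun t : ℝ => t ^ 2 + 1) atTop atTop :=
      tendsto_atTop_add_const_right _ 1 (tendsto_pow_atTop two_ne_zero)
    simpa using (tendsto_const_nhds (x := (1 : ℝ))).sub (tendsto_inv_atTop_zero.comp h)
  refine tendsto_of_tendsto_of_tendsto_of_le_of_le' hlow tendsto_const_nhds ?_ ?_ <;>
    filter_upwards [eventually_gt_atTop 0] with t ht <;>
    have hφt : 0 < φ t / t := div_pos (gaussianPDFReal_pos 0 1 t one_ne_zero) ht
  · rw [Pi.div_apply, le_div_iff₀ hφt]
    refine le_of_eq_of_le ?_ (div_sq_add_one_mul_gaussianPDFReal_zero_one_le_gaussianTail t)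
    field_simp
    ring
  · exact (div_le_one hφt).2 (gaussianTail_le_gaussianPDFReal_zero_one_div ht)

lemma tendsto_inv_mul_add_self_atTop (x : ℝ) : Tendsto (fun b : ℝ => b⁻¹ * x + b) atTop atTop := by
  simpa using (tendsto_inv_atTop_zero.mul_const x).add_atTop tendsto_id

lemma tendsto_gaussianPDFReal_zero_one_div_self_ratio (x : ℝ) :
    Tendsto (fun b => (φ (b⁻¹ * x + b) / (b⁻¹ * x + b)) / (φ b / b)) atTop (𝓝 (exp (-x))) := by
  set F : ℝ → ℝ := fun s => exp (-x - x ^ 2 * s ^ 2 / 2) / (1 + x * s ^ 2)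
  have hF : Tendsto F (𝓝 0) (𝓝 (exp (-x))) := by
    have : ContinuousAt F 0 := by fun_prop (disch := simp)
    simpa [F] using this.tendsto
  refine (hF.comp tendsto_inv_atTop_zero).congr' ?_
  filter_upwards [eventually_gt_atTop 0, (tendsto_inv_mul_add_self_atTop x).eventually_gt_atTop 0]
    with b hb hc
  rw [Function.comp_apply, div_div_div_comm, gaussianPDFReal_zero_one_div]
  simp only [F]
  congr 1
  · congr 1
    field_simp
    ring
  · field_simp
    ring

lemma tendsto_gaussianTail_inv_mul_add_self_div (x : ℝ) :
    Tendsto (fun b => gaussianTail (b⁻¹ * x + b) / gaussianTail b) atTop (𝓝 (exp (-x))) :=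
  ((gaussianTail_isEquivalent.comp_tendsto (tendsto_inv_mul_add_self_atTop x)).div
    gaussianTail_isEquivalent).symm.tendsto_nhds (tendsto_gaussianPDFReal_zero_one_div_self_ratio x)

lemma tendsto_atTop_of_antitone_of_tendsto_zero {α ι : Type*} [LinearOrder α] {l : Filter ι}
    {f : α → ℝ} (hf : Antitone f) (hpos : ∀ a, 0 < f a) {u : ι → α}
    (hu : Tendsto (f ∘ u) l (𝓝 0)) : Tendsto u l atTop :=
  tendsto_atTop.2 fun a =>
    (hu.eventually (gt_mem_nhds (hpos a))).mono fun _ h => (hf.reflect_lt h).le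

theorem gaussian_normalized_tail_limit_general
    (G : ℝ → ℝ)
    (hG : ∀ t : ℝ, G t = ∫ s in Set.Iic t, (Real.sqrt (2 * Real.pi))⁻¹ * Real.exp (-s ^ 2 / 2))
    (b : ℕ → ℝ)
    (hb : ∀ n : ℕ, 2 ≤ n → 1 - G (b n) = 1 / n)
    (a : ℕ → ℝ) (hab : ∀ n, a n = (b n)⁻¹) (x : ℝ) :
    Tendsto (fun n : ℕ => (n : ℝ) * (1 - G (a n * x + b n))) atTop
      (𝓝 (Real.exp (-x))) := by
  have hG_tail (t : ℝ) : 1 - G t = gaussianTail t := by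
    rw [hG, ← integral_Iic_add_gaussianTail t, funext gaussianPDFReal_zero_one,
      add_sub_cancel_left]
  have hb_tail : ∀ᶠ n : ℕ in atTop, gaussianTail (b n) = (n : ℝ)⁻¹ := by
    filter_upwards [eventually_ge_atTop 2] with n hn
    rw [← hG_tail, hb n hn, one_div]
  have hb_top : Tendsto b atTop atTop :=
    tendsto_atTop_of_antitone_of_tendsto_zero gaussianTail_antitone gaussianTail_pos
      (tendsto_inv_atTop_nhds_zero_nat.congr' (hb_tail.mono fun _ h => h.symm))
  refine ((tendsto_gaussianTail_inv_mul_add_self_div x).comp hb_top).congr' ?_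
  filter_upwards [hb_tail] with n hn
  rw [Function.comp_apply, hab, hG_tail, hn, div_inv_eq_mul, mul_comm]

/-- With `b_n` defined by `1 - G(b_n) = 1/n` and `a_n = 1/b_n` for the standard
Gaussian CDF `G`, one has `n·(1 - G(a_n x + b_n)) → e^{-x}` for all `x`. -/
theorem gaussian_normalized_tail_limit
    (G : ℝ → ℝ)
    (hG : ∀ t : ℝ, G t = ∫ s in Set.Iic t, (Real.sqrt (2 * Real.pi))⁻¹ * Real.exp (-s ^ 2 / 2))
    (b : ℕ → ℝ) (hbpos : ∀ n : ℕ, 2 ≤ n → 0 < b n)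
    (hb : ∀ n : ℕ, 2 ≤ n → 1 - G (b n) = 1 / n)
    (a : ℕ → ℝ) (hab : ∀ n, a n = (b n)⁻¹) (x : ℝ) :
    Tendsto (fun n : ℕ => (n : ℝ) * (1 - G (a n * x + b n))) atTop
      (𝓝 (Real.exp (-x))) :=
  gaussian_normalized_tail_limit_general G hG b hb a hab x
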